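/- arXiv:1008.3691 — 6 statements merged into one kernel-verified Lean document; each statement's English description precedes it below -/
import Mathlib

section
/- For all positive integers r, w, d, t with w ≤ r and t ≥ r + w, N((r,w;d),t) = bc_d(I_t(r,w)), i.e. the minimum number of points of an (r,w;d)-cover-free family with t blocks equals the d-biclique covering number of the bi-intersection graph I_t(r,w). -/
/-!
A point `i` of an `(r,w;d)`-CFF yields a biclique of `I_t(r,w)`: the `r`-sets all of whose
blocks contain `i` against the `w`-sets none of whose blocks contains `i`. The edge
`{L, M}` lies in this biclique exactly when `i ∈ ⋂_{l ∈ L} B_l \ ⋃_{m ∈ M} B_m`, so the `n`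
points give a `d`-biclique cover. Conversely, given `n` bicliques, put `i` into block `j`
when some `r`-set containing `j` is a vertex of biclique `i`. If biclique `i` contains the edge
`{L, M}`, all its `r`-set vertices lie on the side of `L` (no two `r`-sets are adjacent), hence
are disjoint from `M`; so `i` lies in every block of `L` and in no block of `M`. Both
translations keep the number of points, so the two minima agree.
-/

/-- `B : Fin t → Finset (Fin n)` is an (r,w;d)-cover-free family: for any disjoint
index sets `L, M` with `|L| = r`, `|M| = w`, the intersection of the blocks in `L`
has at least `d` elements outside the union of the blocks in `M`. -/
def IsCFF (r w d n t : ℕ) (B : Fin t → Finset (Fin n)) : Prop :=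
  ∀ L M : Finset (Fin t), Disjoint L M → L.card = r → M.card = w →
    d ≤ ((L.inf B) \ (M.sup B)).card

/-- `Ncff r w d t` = `N((r,w;d),t)`, the minimum number of points of an
(r,w;d)-CFF with `t` blocks, with the convention that it equals 1 if `r = 0` or `w = 0`. -/
noncomputable def Ncff (r w d t : ℕ) : ℕ :=
  if r = 0 ∨ w = 0 then 1
  else sInf {n : ℕ | ∃ B : Fin t → Finset (Fin n), IsCFF r w d n t B}
/-- `F` is a `d`-biclique cover of `G` by `n` bicliques: each `F i` is a pair of
disjoint vertex sets with all cross pairs adjacent in `G`, and every edge of `G`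
lies in at least `d` of the bicliques. -/
def IsBicliqueCoverD {V : Type*} (G : SimpleGraph V) (d n : ℕ)
    (F : Fin n → Finset V × Finset V) : Prop :=
  (∀ i, Disjoint (F i).1 (F i).2 ∧ ∀ x ∈ (F i).1, ∀ y ∈ (F i).2, G.Adj x y) ∧
  (∀ x y, G.Adj x y →
    d ≤ Nat.card {i : Fin n // (x ∈ (F i).1 ∧ y ∈ (F i).2) ∨ (y ∈ (F i).1 ∧ x ∈ (F i).2)})

/-- `bcD G d` = the `d`-biclique covering number of `G`. -/
noncomputable def bcD {V : Type*} (G : SimpleGraph V) (d : ℕ) : ℕ :=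
  sInf {n : ℕ | ∃ F : Fin n → Finset V × Finset V, IsBicliqueCoverD G d n F}
/-- The bi-intersection graph `I_t(r,w)`: a bipartite graph whose left vertices are
the `r`-subsets of `[t]` and right vertices are the `w`-subsets of `[t]`, with an
`r`-subset adjacent to a `w`-subset iff they are disjoint. -/
def biIntGraph (t r w : ℕ) : SimpleGraph (Finset (Fin t) ⊕ Finset (Fin t)) :=
  SimpleGraph.fromRel (fun a b =>
    ∃ A B : Finset (Fin t), a = Sum.inl A ∧ b = Sum.inr B ∧
      A.card = r ∧ B.card = w ∧ Disjoint A B)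

open Finset

lemma natCard_subtype_eq_card {α : Type*} {P : α → Prop} {s : Finset α}
    (h : ∀ a, P a ↔ a ∈ s) : Nat.card {a // P a} = s.card := by
  rw [← Nat.card_eq_finsetCard]
  exact Nat.card_congr (Equiv.subtypeEquivRight h)

lemma natCard_subtype_le_card {α : Type*} {P : α → Prop} {s : Finset α}
    (h : ∀ a, P a → a ∈ s) : Nat.card {a // P a} ≤ s.card := by
  rw [← Nat.card_eq_finsetCard]
  exact Nat.card_le_card_of_injective (fun a => ⟨a.1, h _ a.2⟩)
    fun a b hab => Subtype.ext (congrArg Subtype.val hab :)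

section biIntGraph

variable {t r w : ℕ} {A M : Finset (Fin t)}

lemma biIntGraph_adj_inl_inr :
    (biIntGraph t r w).Adj (Sum.inl A) (Sum.inr M) ↔
      A.card = r ∧ M.card = w ∧ Disjoint A M := by
  simp [biIntGraph, SimpleGraph.fromRel_adj]

lemma biIntGraph_not_adj_inl_inl : ¬ (biIntGraph t r w).Adj (Sum.inl A) (Sum.inl M) := by
  simp [biIntGraph, SimpleGraph.fromRel_adj]

lemma biIntGraph_not_adj_inr_inr : ¬ (biIntGraph t r w).Adj (Sum.inr A) (Sum.inr M) := by
  simp [biIntGraph, SimpleGraph.fromRel_adj]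

end biIntGraph

def pointBiclique {n t : ℕ} (r w : ℕ) (B : Fin t → Finset (Fin n)) (i : Fin n) :
    Finset (Finset (Fin t) ⊕ Finset (Fin t)) × Finset (Finset (Fin t) ⊕ Finset (Fin t)) :=
  ((univ.filter fun A => A.card = r ∧ i ∈ A.inf B).image Sum.inl,
   (univ.filter fun M => M.card = w ∧ i ∉ M.sup B).image Sum.inr)

section pointBiclique

variable {r w n t : ℕ} {B : Fin t → Finset (Fin n)}

lemma disjoint_pointBiclique (i : Fin n) :
    Disjoint (pointBiclique r w B i).1 (pointBiclique r w B i).2 := by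
  simp [pointBiclique, disjoint_left]

lemma pointBiclique_adj (i : Fin n) :
    ∀ x ∈ (pointBiclique r w B i).1, ∀ y ∈ (pointBiclique r w B i).2,
      (biIntGraph t r w).Adj x y := by
  simp only [pointBiclique, mem_image, mem_filter, mem_univ, true_and]
  rintro _ ⟨A, ⟨hA, hiA⟩, rfl⟩ _ ⟨M, ⟨hM, hiM⟩, rfl⟩
  refine biIntGraph_adj_inl_inr.2 ⟨hA, hM, disjoint_left.2 fun j hjA hjM => hiM ?_⟩
  exact mem_sup.2 ⟨j, hjM, (mem_inf.1 hiA) j hjA⟩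

lemma mem_pointBiclique_iff {L M : Finset (Fin t)} (hL : L.card = r) (hM : M.card = w)
    (i : Fin n) :
    (Sum.inl L ∈ (pointBiclique r w B i).1 ∧ Sum.inr M ∈ (pointBiclique r w B i).2 ∨
      Sum.inr M ∈ (pointBiclique r w B i).1 ∧ Sum.inl L ∈ (pointBiclique r w B i).2) ↔
      i ∈ L.inf B \ M.sup B := by
  simp [pointBiclique, hL, hM]

theorem IsCFF.isBicliqueCoverD_pointBiclique {d : ℕ}
    (hB : IsCFF r w d n t B) :
    IsBicliqueCoverD (biIntGraph t r w) d n (pointBiclique r w B) := by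
  have covered {L M : Finset (Fin t)} (hadj : (biIntGraph t r w).Adj (Sum.inl L) (Sum.inr M)) :
      d ≤ Nat.card {i // Sum.inl L ∈ (pointBiclique r w B i).1 ∧
          Sum.inr M ∈ (pointBiclique r w B i).2 ∨
        Sum.inr M ∈ (pointBiclique r w B i).1 ∧ Sum.inl L ∈ (pointBiclique r w B i).2} := by
    obtain ⟨hL, hM, hLM⟩ := biIntGraph_adj_inl_inr.1 hadj
    rw [natCard_subtype_eq_card (mem_pointBiclique_iff hL hM)]
    exact hB L M hLM hL hM
  refine ⟨fun i => ⟨disjoint_pointBiclique i, pointBiclique_adj i⟩, ?_⟩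
  rintro (_ | _) (_ | _) hadj
  · exact absurd hadj biIntGraph_not_adj_inl_inl
  · exact covered hadj
  · simpa only [or_comm] using covered hadj.symm
  · exact absurd hadj biIntGraph_not_adj_inr_inr

end pointBiclique

def coverBlocks {n t : ℕ}
    (F : Fin n → Finset (Finset (Fin t) ⊕ Finset (Fin t)) ×
      Finset (Finset (Fin t) ⊕ Finset (Fin t)))
    (j : Fin t) : Finset (Fin n) :=
  univ.filter fun i => ∃ A : Finset (Fin t), j ∈ A ∧ Sum.inl A ∈ (F i).1 ∪ (F i).2

section coverBlocks

variable {r w t : ℕ}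

lemma disjoint_of_mem_biclique {X Y : Finset (Finset (Fin t) ⊕ Finset (Fin t))}
    (hXY : ∀ x ∈ X, ∀ y ∈ Y, (biIntGraph t r w).Adj x y) {L M A : Finset (Fin t)}
    (hL : Sum.inl L ∈ X) (hM : Sum.inr M ∈ Y) (hA : Sum.inl A ∈ X ∪ Y) : Disjoint A M := by
  rcases mem_union.1 hA with hA | hA
  · exact (biIntGraph_adj_inl_inr.1 (hXY _ hA _ hM)).2.2
  · exact absurd (hXY _ hL _ hA) biIntGraph_not_adj_inl_inl

lemma mem_coverBlocks_sdiff {n : ℕ}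
    {F : Fin n → Finset (Finset (Fin t) ⊕ Finset (Fin t)) ×
      Finset (Finset (Fin t) ⊕ Finset (Fin t))}
    {L M : Finset (Fin t)} {i : Fin n}
    (hbi : ∀ x ∈ (F i).1, ∀ y ∈ (F i).2, (biIntGraph t r w).Adj x y)
    (hi : Sum.inl L ∈ (F i).1 ∧ Sum.inr M ∈ (F i).2 ∨
      Sum.inr M ∈ (F i).1 ∧ Sum.inl L ∈ (F i).2) :
    i ∈ L.inf (coverBlocks F) \ M.sup (coverBlocks F) := by
  obtain ⟨hL, hdisj⟩ : Sum.inl L ∈ (F i).1 ∪ (F i).2 ∧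
      ∀ A, Sum.inl A ∈ (F i).1 ∪ (F i).2 → Disjoint A M := by
    rcases hi with ⟨hL, hM⟩ | ⟨hM, hL⟩
    · exact ⟨mem_union_left _ hL, fun A => disjoint_of_mem_biclique hbi hL hM⟩
    · exact ⟨mem_union_right _ hL, fun A hA => disjoint_of_mem_biclique
        (fun y hy x hx => (hbi x hx y hy).symm) hL hM (union_comm (F i).1 _ ▸ hA)⟩
  simp only [coverBlocks, mem_sdiff, mem_inf, mem_sup, mem_filter, mem_univ, true_and]
  exact ⟨fun j hj => ⟨L, hj, hL⟩,
    fun ⟨m, hm, A, hmA, hA⟩ => disjoint_left.1 (hdisj A hA) hmA hm⟩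

theorem IsBicliqueCoverD.isCFF_coverBlocks {d n : ℕ}
    {F : Fin n → Finset (Finset (Fin t) ⊕ Finset (Fin t)) ×
      Finset (Finset (Fin t) ⊕ Finset (Fin t))}
    (hF : IsBicliqueCoverD (biIntGraph t r w) d n F) : IsCFF r w d n t (coverBlocks F) :=
  fun _ _ hLM hL hM => (hF.2 _ _ (biIntGraph_adj_inl_inr.2 ⟨hL, hM, hLM⟩)).trans
    (natCard_subtype_le_card fun i => mem_coverBlocks_sdiff (hF.1 i).2)

end coverBlocks

theorem cff_eq_d_biclique_cover_general (r w d t : ℕ) (hw : 0 < w) (hwr : w ≤ r) :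
    Ncff r w d t = bcD (biIntGraph t r w) d := by
  rw [Ncff, if_neg (by omega), bcD]
  congr 1
  ext n
  exact ⟨fun ⟨_, hB⟩ => ⟨_, hB.isBicliqueCoverD_pointBiclique⟩,
    fun ⟨_, hF⟩ => ⟨_, hF.isCFF_coverBlocks⟩⟩

/-- For positive integers `r, w, d, t` with `w ≤ r` and `t ≥ r + w`,
`N((r,w;d),t) = bc_d(I_t(r,w))`. -/
theorem cff_eq_d_biclique_cover (r w d t : ℕ) (hw : 0 < w) (hwr : w ≤ r) (hd : 0 < d)
    (ht : r + w ≤ t) :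
    Ncff r w d t = bcD (biIntGraph t r w) d :=
  cff_eq_d_biclique_cover_general r w d t hw hwr
end

section
/- For every finite simple graph G that contains no 4-cycle C₄ as a subgraph, the biclique covering number of G equals the vertex covering number of G: bc(G) = β(G). -/
/-- `vcNum G` = `β(G)`, the minimum size of a vertex cover of `G`. -/
noncomputable def vcNum {V : Type*} [Fintype V] (G : SimpleGraph V) : ℕ :=
  sInf {k : ℕ | ∃ K : Finset V, K.card = k ∧ ∀ ⦃x y : V⦄, G.Adj x y → x ∈ K ∨ y ∈ K}

/-
A biclique `(A, B)` with two vertices on each side contains a 4-cycle, so in a `C₄`-free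
graph every biclique has a side with at most one vertex. Choosing that side in each biclique
of a cover gives a vertex cover of no larger size; conversely, the stars centred at the
vertices of a vertex cover form a biclique cover.
-/

open Finset

section

variable {V : Type*} {G : SimpleGraph V}

theorem bcD_le {d n : ℕ} {F : Fin n → Finset V × Finset V} (hF : IsBicliqueCoverD G d n F) :
    bcD G d ≤ n :=
  Nat.sInf_le ⟨F, hF⟩

theorem exists_isBicliqueCoverD_bcD {d n : ℕ} {F : Fin n → Finset V × Finset V}
    (hF : IsBicliqueCoverD G d n F) : ∃ F', IsBicliqueCoverD G d (bcD G d) F' :=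
  Nat.sInf_mem (⟨n, F, hF⟩ : {m | ∃ F, IsBicliqueCoverD G d m F}.Nonempty)

theorem vcNum_le_card [Fintype V] {K : Finset V} (hK : G.IsVertexCover K) : vcNum G ≤ #K :=
  Nat.sInf_le ⟨K, rfl, hK⟩

theorem exists_isVertexCover_card_eq_vcNum [Fintype V] (G : SimpleGraph V) :
    ∃ K : Finset V, G.IsVertexCover K ∧ #K = vcNum G := by
  obtain ⟨K, hK, hcover⟩ := Nat.sInf_mem (⟨_, univ, rfl, by simp⟩ : {k : ℕ | ∃ K : Finset V,
    #K = k ∧ ∀ ⦃x y : V⦄, G.Adj x y → x ∈ K ∨ y ∈ K}.Nonempty)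
  exact ⟨K, hcover, hK⟩

theorem isBicliqueCoverD_one_iff {n : ℕ} {F : Fin n → Finset V × Finset V} :
    IsBicliqueCoverD G 1 n F ↔
      (∀ i, Disjoint (F i).1 (F i).2 ∧ ∀ x ∈ (F i).1, ∀ y ∈ (F i).2, G.Adj x y) ∧
      ∀ x y, G.Adj x y →
        ∃ i, (x ∈ (F i).1 ∧ y ∈ (F i).2) ∨ (y ∈ (F i).1 ∧ x ∈ (F i).2) := by
  simp only [IsBicliqueCoverD, Nat.one_le_iff_ne_zero, Nat.card_ne_zero, nonempty_subtype,
    Subtype.finite, and_true]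

theorem card_le_one_or_card_le_one_of_biclique
    (hC4 : ∀ a b c d : V, a ≠ b → a ≠ c → a ≠ d → b ≠ c → b ≠ d → c ≠ d →
      ¬(G.Adj a b ∧ G.Adj b c ∧ G.Adj c d ∧ G.Adj d a))
    {A B : Finset V} (hAB : Disjoint A B) (hadj : ∀ x ∈ A, ∀ y ∈ B, G.Adj x y) :
    #A ≤ 1 ∨ #B ≤ 1 := by
  by_contra! ⟨hA, hB⟩
  obtain ⟨a, ha, b, hb, hab⟩ := one_lt_card.1 hA
  obtain ⟨c, hc, d, hd, hcd⟩ := one_lt_card.1 hB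
  have hne : ∀ x ∈ A, ∀ y ∈ B, x ≠ y := fun x hx y hy => ne_of_mem_of_not_mem hx
    (disjoint_right.1 hAB hy)
  exact hC4 a c b d (hne a ha c hc) hab (hne a ha d hd) (hne b hb c hc).symm hcd (hne b hb d hd)
    ⟨hadj a ha c hc, (hadj b hb c hc).symm, hadj b hb d hd, (hadj a ha d hd).symm⟩

theorem exists_isBicliqueCoverD_one_of_isVertexCover [Fintype V] {K : Finset V}
    (hK : G.IsVertexCover K) : ∃ F, IsBicliqueCoverD G 1 #K F := by
  classical
  let center (i : Fin #K) : V := K.equivFin.symm i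
  refine ⟨fun i => ({center i}, G.neighborFinset (center i)), isBicliqueCoverD_one_iff.2
    ⟨fun i => ⟨by simp, by simp⟩, fun x y hxy => ?_⟩⟩
  rcases hK hxy with hx | hy
  · exact ⟨K.equivFin ⟨x, hx⟩, Or.inl (by simp [center, hxy])⟩
  · exact ⟨K.equivFin ⟨y, hy⟩, Or.inr (by simp [center, hxy.symm])⟩

theorem vcNum_le_of_isBicliqueCoverD_one [Fintype V]
    (hC4 : ∀ a b c d : V, a ≠ b → a ≠ c → a ≠ d → b ≠ c → b ≠ d → c ≠ d →
      ¬(G.Adj a b ∧ G.Adj b c ∧ G.Adj c d ∧ G.Adj d a))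
    {n : ℕ} {F : Fin n → Finset V × Finset V} (hF : IsBicliqueCoverD G 1 n F) :
    vcNum G ≤ n := by
  classical
  obtain ⟨hbic, hcov⟩ := isBicliqueCoverD_one_iff.1 hF
  let small (i : Fin n) : Finset V := if #(F i).1 ≤ 1 then (F i).1 else (F i).2
  have hsmall (i : Fin n) : #(small i) ≤ 1 := by
    have := card_le_one_or_card_le_one_of_biclique hC4 (hbic i).1 (hbic i).2
    unfold small
    split_ifs <;> omega
  have hK : G.IsVertexCover (univ.biUnion small) := by
    intro x y hxy
    obtain ⟨i, hi⟩ := hcov x y hxy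
    simp only [mem_coe, mem_biUnion, mem_univ, true_and]
    by_cases h : #(F i).1 ≤ 1 <;> grind
  calc vcNum G ≤ #(univ.biUnion small) := vcNum_le_card hK
    _ ≤ ∑ i, #(small i) := card_biUnion_le
    _ ≤ ∑ _i : Fin n, 1 := sum_le_sum fun i _ => hsmall i
    _ = n := by simp

end

/-- For every finite simple graph `G` with no 4-cycle as a subgraph,
the biclique covering number of `G` equals its vertex covering number. -/
theorem bc_eq_vertexCover_of_C4_free {V : Type*} [Fintype V] (G : SimpleGraph V)
    (hC4 : ∀ a b c d : V, a ≠ b → a ≠ c → a ≠ d → b ≠ c → b ≠ d → c ≠ d →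
      ¬(G.Adj a b ∧ G.Adj b c ∧ G.Adj c d ∧ G.Adj d a)) :
    bcD G 1 = vcNum G := by
  obtain ⟨K, hK, hKcard⟩ := exists_isVertexCover_card_eq_vcNum G
  obtain ⟨F, hstars⟩ := exists_isBicliqueCoverD_one_of_isVertexCover hK
  obtain ⟨F', hF'⟩ := exists_isBicliqueCoverD_bcD hstars
  exact le_antisymm (hKcard ▸ bcD_le hstars) (vcNum_le_of_isBicliqueCoverD_one hC4 hF')
end

section
/- For all positive integers r, w, t with w ≤ r, if t = r + w or t = r + w + 1 then N((r,w),t) = min{C(t,r), C(t,w)} = C(t,w), where C(·,·) denotes the binomial coefficient. -/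
open Finset
open scoped FinsetFamily

theorem Nat.choose_le_choose_of_le_of_add_le {n k l : ℕ} (hkl : k ≤ l) (hn : l + k ≤ n) :
    n.choose k ≤ n.choose l := by
  wlog hl : 2 * l ≤ n generalizing l
  · rw [← Nat.choose_symm (show l ≤ n by omega)]
    exact this (by omega) (by omega) (by omega)
  induction l, hkl using Nat.le_induction with
  | base => rfl
  | succ m _ ih =>
    exact (ih (by omega) (by omega)).trans (Nat.choose_le_succ_of_lt_half_left (by omega))

theorem Finset.card_le_card_upShadow {α : Type*} [DecidableEq α] [Fintype α]
    {𝒜 : Finset (Finset α)} {w : ℕ} (h𝒜 : (𝒜 : Set (Finset α)).Sized w)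
    (hw : 2 * w < Fintype.card α) : #𝒜 ≤ #(∂⁺ 𝒜) := by
  have lym := card_mul_le_card_shadow_mul h𝒜.compls
  rw [card_compls, shadow_compls, card_compls] at lym
  exact Nat.le_of_mul_le_mul_right (lym.trans (Nat.mul_le_mul_left _ (by omega))) (by omega)

def Separates {α : Type*} (r w : ℕ) (𝒮 : Finset (Finset α)) : Prop :=
  ∀ L M : Finset α, Disjoint L M → #L = r → #M = w → ∃ P ∈ 𝒮, M ⊆ P ∧ Disjoint L P

section Separates

variable {α : Type*} [DecidableEq α] [Fintype α] {r w : ℕ} {𝒮 : Finset (Finset α)}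

theorem Separates.mem_of_card_eq_add (h𝒮 : Separates r w 𝒮) (hα : Fintype.card α = r + w)
    {M : Finset α} (hM : #M = w) : M ∈ 𝒮 := by
  obtain ⟨P, hP, hMP, hPM⟩ := h𝒮 Mᶜ M disjoint_compl_left (by rw [card_compl, hM]; omega) hM
  rwa [← hMP.antisymm (disjoint_compl_left_iff.mp hPM)] at hP

theorem Separates.insert_mem (h𝒮 : Separates r w 𝒮) (hα : Fintype.card α = r + w + 1)
    {M : Finset α} (hM : #M = w) (hM𝒮 : M ∉ 𝒮) {j : α} (hj : j ∉ M) : insert j M ∈ 𝒮 := by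
  obtain ⟨P, hP, hMP, hLP⟩ := h𝒮 (Mᶜ.erase j) M (disjoint_compl_left.mono_left (erase_subset _ _))
    (by rw [card_erase_of_mem (mem_compl.mpr hj), card_compl, hM]; omega) hM
  have hPjM : P ⊆ insert j M := fun i hi => by
    by_contra hi'
    rw [mem_insert, not_or] at hi'
    exact disjoint_left.mp hLP (mem_erase.mpr ⟨hi'.1, mem_compl.mpr hi'.2⟩) hi
  have hjP : j ∈ P := by
    by_contra hjP
    exact hM𝒮 (hMP.antisymm ((subset_insert_iff_of_notMem hjP).mp hPjM) ▸ hP)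
  rwa [← hPjM.antisymm (insert_subset hjP hMP)]

theorem Separates.choose_le_card (h𝒮 : Separates r w 𝒮) (hwr : w ≤ r)
    (hα : Fintype.card α = r + w ∨ Fintype.card α = r + w + 1) :
    (Fintype.card α).choose w ≤ #𝒮 := by
  set 𝒲 := (univ : Finset α).powersetCard w
  have h𝒲 : (Fintype.card α).choose w = #𝒲 := by rw [card_powersetCard, card_univ]
  rcases hα with hα | hα
  · exact h𝒲 ▸ card_le_card fun M hM => h𝒮.mem_of_card_eq_add hα (mem_powersetCard.mp hM).2
  set 𝒰 := 𝒲.filter (· ∉ 𝒮)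
  have h𝒰 : (𝒰 : Set (Finset α)).Sized w := fun M hM => (mem_powersetCard.mp (mem_filter.mp hM).1).2
  have hshadow : ∂⁺ 𝒰 ⊆ 𝒮 := fun N hN => by
    obtain ⟨M, hM, j, hj, rfl⟩ := mem_upShadow_iff.mp hN
    exact h𝒮.insert_mem hα (h𝒰 hM) (mem_filter.mp hM).2 hj
  have hdisj : Disjoint (𝒲.filter (· ∈ 𝒮)) (∂⁺ 𝒰) := disjoint_left.mpr fun M hM hM' => by
    have := h𝒰.upShadow hM'
    rw [(mem_powersetCard.mp (mem_filter.mp hM).1).2] at this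
    omega
  calc (Fintype.card α).choose w = #(𝒲.filter (· ∈ 𝒮)) + #𝒰 :=
        h𝒲.trans (card_filter_add_card_filter_not _).symm
    _ ≤ #(𝒲.filter (· ∈ 𝒮)) + #(∂⁺ 𝒰) :=
        Nat.add_le_add_left (card_le_card_upShadow h𝒰 (by omega)) _
    _ = #(𝒲.filter (· ∈ 𝒮) ∪ ∂⁺ 𝒰) := (card_union_of_disjoint hdisj).symm
    _ ≤ #𝒮 := card_le_card (union_subset (fun M hM => (mem_filter.mp hM).2) hshadow)

end Separates

theorem IsCFF.separates {r w n t : ℕ} {B : Fin t → Finset (Fin n)} (hB : IsCFF r w 1 n t B) :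
    Separates r w (univ.image fun x => univ.filter fun i => x ∉ B i) := by
  intro L M hLM hL hM
  obtain ⟨x, hx⟩ := card_pos.mp (hB L M hLM hL hM)
  rw [mem_sdiff, mem_inf, mem_sup, not_exists] at hx
  refine ⟨_, mem_image_of_mem _ (mem_univ x), fun i hi => ?_, disjoint_left.mpr fun i hi => ?_⟩
  · simpa using fun hxi => hx.2 i ⟨hi, hxi⟩
  · simpa using hx.1 i hi

theorem IsCFF.choose_le {r w n t : ℕ} {B : Fin t → Finset (Fin n)} (hB : IsCFF r w 1 n t B)
    (hwr : w ≤ r) (ht : t = r + w ∨ t = r + w + 1) : t.choose w ≤ n := by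
  have := hB.separates.choose_le_card hwr (by simpa using ht)
  rw [Fintype.card_fin] at this
  exact this.trans (card_image_le.trans_eq (card_fin n))

theorem exists_isCFF_choose (r w t : ℕ) :
    ∃ B : Fin t → Finset (Fin (t.choose w)), IsCFF r w 1 (t.choose w) t B := by
  let e : Fin (t.choose w) ≃ {M : Finset (Fin t) // #M = w} :=
    (Fintype.equivFinOfCardEq (by simp)).symm
  refine ⟨fun i => univ.filter fun x => i ∉ (e x).1, fun L M hLM _ hM => ?_⟩
  refine one_le_card.mpr ⟨e.symm ⟨M, hM⟩, mem_sdiff.mpr ⟨?_, ?_⟩⟩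
  · simpa [mem_inf] using fun i hi => disjoint_left.mp hLM hi
  · simp [mem_sup]

theorem Ncff_eq_of_isLeast {r w d t n : ℕ} (hr : r ≠ 0) (hw : w ≠ 0)
    (h : IsLeast {n | ∃ B : Fin t → Finset (Fin n), IsCFF r w d n t B} n) : Ncff r w d t = n := by
  rw [Ncff, if_neg (not_or.mpr ⟨hr, hw⟩)]
  exact h.csInf_eq

/-- For positive integers `r, w, t` with `w ≤ r`, if `t = r + w` or `t = r + w + 1`,
then `N((r,w),t) = min{C(t,r), C(t,w)} = C(t,w)`. -/
theorem cff_small_t (r w t : ℕ) (hw : 0 < w) (hwr : w ≤ r)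
    (ht : t = r + w ∨ t = r + w + 1) :
    Ncff r w 1 t = min (t.choose r) (t.choose w) ∧ Ncff r w 1 t = t.choose w := by
  have hN : Ncff r w 1 t = t.choose w :=
    Ncff_eq_of_isLeast (by omega) (by omega)
      ⟨exists_isCFF_choose r w t, fun _ ⟨_, hB⟩ => hB.choose_le hwr ht⟩
  have hchoose : t.choose w ≤ t.choose r :=
    Nat.choose_le_choose_of_le_of_add_le hwr (by omega)
  exact ⟨hN.trans (min_eq_right hchoose).symm, hN⟩
end

section
/- For all positive integers r, w, d, s, t with w ≤ r, 0 < s ≤ r + w and t ≥ r + w, it holds that N((r,w;d),t) ≥ Σ_j C(s,j) · N((r−s+j, w−j; d), t−s), where the sum runs over all integers j with max(0, s−r) ≤ j ≤ min(w, s) and C(·,·) denotes the binomial coefficient. -/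
/-!
Take an optimal `(r,w;d)`-CFF and a set `F` of `s` of its blocks, and sort the points into cells
according to which blocks of `F` contain them. For `S ⊆ F` with `|S| = j`, the cell of points
lying in exactly the blocks of `F \ S` carries the remaining `t - s` blocks as an
`(r-s+j, w-j; d)`-CFF: disjoint `L', M'` among them extend to `L = (F \ S) ∪ L'`,
`M = S ∪ M'`, and every point of `⋂_L B \ ⋃_M B` lies in that cell. There are `C(s,j)` such
cells for each `j`, all pairwise disjoint, so the bound follows by counting points.
-/

open Finset

def IsCoverFree {ι α : Type*} [Fintype α] [DecidableEq α] (r w d : ℕ) (B : ι → Finset α) :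
    Prop :=
  ∀ L M : Finset ι, Disjoint L M → #L = r → #M = w → d ≤ #(L.inf B \ M.sup B)

theorem isCFF_iff_isCoverFree {r w d n t : ℕ} {B : Fin t → Finset (Fin n)} :
    IsCFF r w d n t B ↔ IsCoverFree r w d B :=
  Iff.rfl

section CoverFree

variable {ι κ α β : Type*} [Fintype α] [DecidableEq α] [Fintype β] [DecidableEq β]
  {r w d : ℕ} {B : ι → Finset α}

theorem mem_inf_sdiff_sup {L M : Finset ι} {x : α} :
    x ∈ L.inf B \ M.sup B ↔ (∀ i ∈ L, x ∈ B i) ∧ ∀ i ∈ M, x ∉ B i := by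
  simp [Finset.mem_inf]

theorem exists_disjoint_card_eq [Fintype ι] (h : r + w ≤ Fintype.card ι) :
    ∃ L M : Finset ι, Disjoint L M ∧ #L = r ∧ #M = w := by
  classical
  obtain ⟨L, -, hL⟩ := exists_subset_card_eq (s := (univ : Finset ι)) (n := r) (by simp; omega)
  obtain ⟨M, hM, hMc⟩ := exists_subset_card_eq (s := univ \ L) (n := w)
    (by rw [card_sdiff_of_subset (subset_univ L), card_univ]; omega)
  exact ⟨L, M, disjoint_sdiff.mono_right hM, hL, hMc⟩

theorem IsCoverFree.le_card [Fintype ι] (hB : IsCoverFree r w d B)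
    (h : r + w ≤ Fintype.card ι) : d ≤ Fintype.card α := by
  obtain ⟨L, M, hLM, hL, hM⟩ := exists_disjoint_card_eq h
  exact (hB L M hLM hL hM).trans (card_le_univ _)

theorem IsCoverFree.reindex (hB : IsCoverFree r w d B) (e : κ ↪ ι) (f : α ≃ β) :
    IsCoverFree r w d fun k => (B (e k)).map f.toEmbedding := by
  intro L M hLM hL hM
  have hmap : ((L.inf fun k => (B (e k)).map f.toEmbedding) \
      M.sup fun k => (B (e k)).map f.toEmbedding) =
      ((L.map e).inf B \ (M.map e).sup B).map f.toEmbedding := by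
    ext y
    simp only [mem_inf_sdiff_sup, mem_map_equiv, forall_mem_map]
  rw [hmap, card_map]
  exact hB _ _ (disjoint_map e |>.mpr hLM) (by rw [card_map, hL]) (by rw [card_map, hM])

theorem IsCoverFree.ncff_le_card [Fintype ι] (hB : IsCoverFree r w d B) (hd : 0 < d)
    (h : r + w ≤ Fintype.card ι) : Ncff r w d (Fintype.card ι) ≤ Fintype.card α := by
  unfold Ncff
  split_ifs
  · exact hd.trans_le (hB.le_card h)
  · exact Nat.sInf_le ⟨_, hB.reindex (Fintype.equivFin ι).symm.toEmbedding (Fintype.equivFin α)⟩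

theorem isCoverFree_filter_mem_fst [Fintype ι] [DecidableEq ι] (r w d : ℕ) :
    IsCoverFree r w d fun i : ι => univ.filter fun p : Finset ι × Fin d => i ∈ p.1 := by
  intro L M hLM hL hM
  calc d = #((univ : Finset (Fin d)).map ⟨(L, ·), Prod.mk_right_injective L⟩) := by simp
    _ ≤ _ := card_le_card fun p hp => by
      obtain ⟨k, -, rfl⟩ := mem_map.mp hp
      simp only [mem_inf_sdiff_sup, mem_filter, mem_univ, true_and]
      exact ⟨fun i hi => hi, fun i hi hiL => disjoint_left.mp hLM hiL hi⟩

theorem exists_isCFF_ncff {r w d t : ℕ} (hr : r ≠ 0) (hw : w ≠ 0) :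
    ∃ B : Fin t → Finset (Fin (Ncff r w d t)), IsCFF r w d _ t B := by
  have hne : {n : ℕ | ∃ B : Fin t → Finset (Fin n), IsCFF r w d n t B}.Nonempty :=
    ⟨_, _, (isCoverFree_filter_mem_fst r w d).reindex (.refl _) (Fintype.equivFin _)⟩
  rw [Ncff, if_neg (by omega)]
  exact Nat.sInf_mem hne

end CoverFree

section Cell

variable {ι α : Type*} [DecidableEq ι] [Fintype α] [DecidableEq α] {r w d : ℕ} {B : ι → Finset α}

def cell (B : ι → Finset α) (F S : Finset ι) : Finset α :=
  (F \ S).inf B \ S.sup B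

theorem disjoint_cell {F S S' : Finset ι} {i : ι} (hSF : S ⊆ F) (hiS : i ∈ S) (hiS' : i ∉ S') :
    Disjoint (cell B F S) (cell B F S') := by
  refine disjoint_left.mpr fun x hx hx' => ?_
  rw [cell, mem_inf_sdiff_sup] at hx hx'
  exact hx.2 i hiS (hx'.1 i (mem_sdiff.mpr ⟨hSF hiS, hiS'⟩))

theorem pairwiseDisjoint_cell (B : ι → Finset α) (F : Finset ι) :
    (F.powerset : Set (Finset ι)).PairwiseDisjoint (cell B F) := by
  intro S hS S' hS' hne
  simp only [coe_powerset, Set.mem_preimage, Set.mem_powerset_iff, coe_subset] at hS hS'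
  by_cases hSS' : S ⊆ S'
  · obtain ⟨i, hiS', hiS⟩ := not_subset.mp fun h => hne (hSS'.antisymm h)
    exact (disjoint_cell hS' hiS' hiS).symm
  · obtain ⟨i, hiS, hiS'⟩ := not_subset.mp hSS'
    exact disjoint_cell hS hiS hiS'

theorem sum_card_cell_le (B : ι → Finset α) (F : Finset ι) :
    ∑ S ∈ F.powerset, #(cell B F S) ≤ Fintype.card α := by
  rw [← card_biUnion (pairwiseDisjoint_cell B F)]
  exact card_le_univ _

theorem IsCoverFree.restrict_cell (hB : IsCoverFree r w d B) {F S : Finset ι} (hSF : S ⊆ F)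
    (hr : #(F \ S) ≤ r) (hw : #S ≤ w) :
    IsCoverFree (r - #(F \ S)) (w - #S) d
      fun k : {i // i ∉ F} => (B k).subtype (· ∈ cell B F S) := by
  intro L' M' hLM' hL' hM'
  set L := (F \ S) ∪ L'.map (.subtype _)
  set M := S ∪ M'.map (.subtype _)
  have hF : ∀ T : Finset {i // i ∉ F}, Disjoint F (T.map (.subtype _)) := fun T =>
    disjoint_right.mpr fun i hi => by obtain ⟨k, -, rfl⟩ := mem_map.mp hi; exact k.2
  have hLM : Disjoint L M := by
    rw [disjoint_union_left, disjoint_union_right, disjoint_union_right]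
    exact ⟨⟨sdiff_disjoint, (hF M').mono_left sdiff_subset⟩,
      ((hF L').mono_left hSF).symm, disjoint_map _ |>.mpr hLM'⟩
  have hL : #L = r := by
    rw [card_union_of_disjoint ((hF L').mono_left sdiff_subset), card_map, hL']
    omega
  have hM : #M = w := by
    rw [card_union_of_disjoint ((hF M').mono_left hSF), card_map, hM']
    omega
  calc d ≤ #(L.inf B \ M.sup B) := hB L M hLM hL hM
    _ ≤ _ := card_le_card ?_
    _ = _ := card_map (.subtype _)
  intro x hx
  simp only [L, M, mem_inf_sdiff_sup, forall_mem_union, forall_mem_map] at hx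
  have hcell : x ∈ cell B F S := mem_inf_sdiff_sup.mpr ⟨hx.1.1, hx.2.1⟩
  refine mem_map.mpr ⟨⟨x, hcell⟩, ?_, rfl⟩
  simp only [mem_inf_sdiff_sup, mem_subtype]
  exact ⟨hx.1.2, hx.2.2⟩

end Cell

theorem IsCoverFree.sum_choose_mul_ncff_le {ι α : Type*} [Fintype ι] [DecidableEq ι]
    [Fintype α] [DecidableEq α] {r w d : ℕ} {B : ι → Finset α} (hB : IsCoverFree r w d B)
    (hd : 0 < d) (hrw : r + w ≤ Fintype.card ι) (F : Finset ι) :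
    ∑ j ∈ Icc (#F - r) (min w #F),
        (#F).choose j * Ncff (r - (#F - j)) (w - j) d (Fintype.card ι - #F) ≤
      Fintype.card α := by
  have hcell : ∀ j ∈ Icc (#F - r) (min w #F), ∀ S ∈ powersetCard j F,
      Ncff (r - (#F - j)) (w - j) d (Fintype.card ι - #F) ≤ #(cell B F S) := by
    intro j hj S hS
    rw [mem_Icc, le_min_iff] at hj
    rw [mem_powersetCard] at hS
    have hFS : #(F \ S) = #F - j := by rw [card_sdiff_of_subset hS.1, hS.2]
    have hcard : Fintype.card {i // i ∉ F} = Fintype.card ι - #F := by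
      rw [Fintype.card_subtype_compl, Fintype.card_coe]
    have := (hB.restrict_cell hS.1 (by omega) (by omega)).ncff_le_card hd (by omega)
    rwa [hFS, hS.2, hcard, Fintype.card_coe] at this
  calc _ = ∑ j ∈ Icc (#F - r) (min w #F), ∑ S ∈ powersetCard j F,
        Ncff (r - (#F - j)) (w - j) d (Fintype.card ι - #F) := by
        simp only [sum_const, card_powersetCard, smul_eq_mul]
    _ ≤ ∑ j ∈ Icc (#F - r) (min w #F), ∑ S ∈ powersetCard j F, #(cell B F S) :=
        sum_le_sum fun j hj => sum_le_sum (hcell j hj)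
    _ ≤ ∑ j ∈ range (#F + 1), ∑ S ∈ powersetCard j F, #(cell B F S) :=
        sum_le_sum_of_subset fun j hj => by
          rw [mem_Icc, le_min_iff] at hj
          rw [mem_range]
          omega
    _ = ∑ S ∈ F.powerset, #(cell B F S) := (sum_powerset F _).symm
    _ ≤ Fintype.card α := sum_card_cell_le B F

theorem cff_recursive_bound_second_general (r w d s t : ℕ)
    (hr : 0 < r) (hw : 0 < w) (hd : 0 < d)
    (hsrw : s ≤ r + w) (ht : r + w ≤ t) :
    ∑ j ∈ Finset.Icc (s - r) (min w s), s.choose j * Ncff (r - (s - j)) (w - j) d (t - s)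
      ≤ Ncff r w d t := by
  obtain ⟨B, hB⟩ := exists_isCFF_ncff (d := d) (t := t) hr.ne' hw.ne'
  obtain ⟨F, -, hF⟩ := exists_subset_card_eq (s := (univ : Finset (Fin t))) (n := s)
    (by rw [card_univ, Fintype.card_fin]; omega)
  have := (isCFF_iff_isCoverFree.mp hB).sum_choose_mul_ncff_le hd (by rwa [Fintype.card_fin]) F
  rwa [hF, Fintype.card_fin, Fintype.card_fin] at this

/-- For positive integers `r, w, d, s, t` with `w ≤ r`, `0 < s ≤ r + w` and `t ≥ r + w`,
`N((r,w;d),t) ≥ Σ_{max(0,s−r) ≤ j ≤ min(w,s)} C(s,j) · N((r−s+j, w−j; d), t−s)`. -/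
theorem cff_recursive_bound_second (r w d s t : ℕ)
    (hr : 0 < r) (hw : 0 < w) (hwr : w ≤ r) (hd : 0 < d)
    (hs : 0 < s) (hsrw : s ≤ r + w) (ht : r + w ≤ t) :
    ∑ j ∈ Finset.Icc (s - r) (min w s), s.choose j * Ncff (r - (s - j)) (w - j) d (t - s)
      ≤ Ncff r w d t :=
  cff_recursive_bound_second_general r w d s t hr hw hd hsrw ht
end

section
/- For all positive integers r, w, t with w ≤ r and t ≥ r + w, the maximum number of edges among the bicliques of the bi-intersection graph I_t(r,w) satisfies B(I_t(r,w)) = max_{t'+t''=t, t',t''≥0} C(t',r)·C(t'',w), where C(·,·) denotes the binomial coefficient; moreover the number of edges of I_t(r,w) equals C(t,r)·C(t−r,w). -/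
/-- `maxBicliqueEdges G` = `B(G)`, the maximum number of edges among the bicliques
of `G`. -/
noncomputable def maxBicliqueEdges {V : Type*} (G : SimpleGraph V) : ℕ :=
  sSup {m : ℕ | ∃ X Y : Finset V, Disjoint X Y ∧ (∀ x ∈ X, ∀ y ∈ Y, G.Adj x y) ∧
    m = X.card * Y.card}

open Finset Sum

namespace Finset

variable {α : Type*} [Fintype α] [DecidableEq α]

theorem exists_card_mul_card_le_choose_mul_choose {r w : ℕ} {𝒜 ℬ : Finset (Finset α)}
    (h𝒜 : ∀ A ∈ 𝒜, #A = r) (hℬ : ∀ B ∈ ℬ, #B = w)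
    (hdisj : ∀ A ∈ 𝒜, ∀ B ∈ ℬ, Disjoint A B) :
    ∃ t' t'', t' + t'' = Fintype.card α ∧ #𝒜 * #ℬ ≤ t'.choose r * t''.choose w := by
  set S := 𝒜.sup id
  refine ⟨#S, #Sᶜ, by rw [card_add_card_compl], ?_⟩
  have h𝒜S : 𝒜 ⊆ S.powersetCard r := fun A hA =>
    mem_powersetCard.2 ⟨le_sup (f := id) hA, h𝒜 A hA⟩
  have hℬS : ℬ ⊆ Sᶜ.powersetCard w := fun B hB =>
    mem_powersetCard.2 ⟨subset_compl_iff_disjoint_left.2 <|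
      Finset.disjoint_sup_left.2 fun A hA => hdisj A hA B hB, hℬ B hB⟩
  simpa only [card_powersetCard] using Nat.mul_le_mul (card_le_card h𝒜S) (card_le_card hℬS)

end Finset

namespace SimpleGraph

variable {α β : Type*} {G : SimpleGraph (α ⊕ β)}

theorem card_mul_card_eq_of_forall_adj (hl : ∀ a a', ¬G.Adj (inl a) (inl a'))
    (hr : ∀ b b', ¬G.Adj (inr b) (inr b')) {X Y : Finset (α ⊕ β)}
    (hXY : ∀ x ∈ X, ∀ y ∈ Y, G.Adj x y) :
    #X * #Y = #X.toLeft * #Y.toRight ∨ #X * #Y = #Y.toLeft * #X.toRight := by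
  rcases X.eq_empty_or_nonempty with rfl | ⟨x₀, hx₀⟩
  · simp [toLeft]
  rcases Y.eq_empty_or_nonempty with rfl | ⟨y₀, hy₀⟩
  · simp [toRight]
  rw [← card_toLeft_add_card_toRight (u := X), ← card_toLeft_add_card_toRight (u := Y)]
  rcases x₀ with a | b <;> rcases y₀ with a' | b'
  · exact (hl _ _ (hXY _ hx₀ _ hy₀)).elim
  · left
    have h1 : Y.toLeft = ∅ := eq_empty_of_forall_notMem fun a' ha' =>
      hl _ _ (hXY _ hx₀ _ (mem_toLeft.1 ha'))
    have h2 : X.toRight = ∅ := eq_empty_of_forall_notMem fun b hb =>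
      hr _ _ (hXY _ (mem_toRight.1 hb) _ hy₀)
    simp [h1, h2]
  · right
    have h1 : X.toLeft = ∅ := eq_empty_of_forall_notMem fun a ha =>
      hl _ _ (hXY _ (mem_toLeft.1 ha) _ hy₀)
    have h2 : Y.toRight = ∅ := eq_empty_of_forall_notMem fun b' hb' =>
      hr _ _ (hXY _ hx₀ _ (mem_toRight.1 hb'))
    simp [h1, h2, mul_comm]
  · exact (hr _ _ (hXY _ hx₀ _ hy₀)).elim

end SimpleGraph

namespace biIntGraph

variable {t r w : ℕ} {A B : Finset (Fin t)}

@[simp]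
theorem adj_inl_inr :
    (biIntGraph t r w).Adj (inl A) (inr B) ↔ #A = r ∧ #B = w ∧ Disjoint A B := by
  simp [biIntGraph]

@[simp]
theorem adj_inr_inl :
    (biIntGraph t r w).Adj (inr B) (inl A) ↔ #A = r ∧ #B = w ∧ Disjoint A B := by
  simp [biIntGraph]

@[simp]
theorem not_adj_inl_inl : ¬(biIntGraph t r w).Adj (inl A) (inl B) := by
  simp [biIntGraph]

@[simp]
theorem not_adj_inr_inr : ¬(biIntGraph t r w).Adj (inr A) (inr B) := by
  simp [biIntGraph]

variable {X Y : Finset (Finset (Fin t) ⊕ Finset (Fin t))}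

theorem exists_card_toLeft_mul_card_toRight_le
    (hXY : ∀ x ∈ X, ∀ y ∈ Y, (biIntGraph t r w).Adj x y) :
    ∃ t' t'', t' + t'' = t ∧ #X.toLeft * #Y.toRight ≤ t'.choose r * t''.choose w := by
  rcases X.toLeft.eq_empty_or_nonempty with hX | ⟨A₀, hA₀⟩
  · exact ⟨t, 0, rfl, by simp [hX]⟩
  rcases Y.toRight.eq_empty_or_nonempty with hY | ⟨B₀, hB₀⟩
  · exact ⟨t, 0, rfl, by simp [hY]⟩
  have hadj : ∀ A ∈ X.toLeft, ∀ B ∈ Y.toRight, #A = r ∧ #B = w ∧ Disjoint A B :=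
    fun A hA B hB => adj_inl_inr.1 (hXY _ (mem_toLeft.1 hA) _ (mem_toRight.1 hB))
  simpa using exists_card_mul_card_le_choose_mul_choose
    (fun A hA => (hadj A hA B₀ hB₀).1) (fun B hB => (hadj A₀ hA₀ B hB).2.1)
    (fun A hA B hB => (hadj A hA B hB).2.2)

theorem exists_card_mul_card_le (hXY : ∀ x ∈ X, ∀ y ∈ Y, (biIntGraph t r w).Adj x y) :
    ∃ t' t'', t' + t'' = t ∧ #X * #Y ≤ t'.choose r * t''.choose w := by
  rcases SimpleGraph.card_mul_card_eq_of_forall_adj (fun _ _ => not_adj_inl_inl)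
    (fun _ _ => not_adj_inr_inr) hXY with h | h <;> rw [h]
  · exact exists_card_toLeft_mul_card_toRight_le hXY
  · exact exists_card_toLeft_mul_card_toRight_le fun y hy x hx => (hXY x hx y hy).symm

theorem exists_biclique_card_mul_card_eq {t' t'' : ℕ} (ht : t' + t'' = t) :
    ∃ X Y : Finset (Finset (Fin t) ⊕ Finset (Fin t)), Disjoint X Y ∧
      (∀ x ∈ X, ∀ y ∈ Y, (biIntGraph t r w).Adj x y) ∧
      #X * #Y = t'.choose r * t''.choose w := by
  obtain ⟨S, -, hS⟩ := exists_subset_card_eq (s := (univ : Finset (Fin t))) (n := t')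
    (by rw [card_fin]; omega)
  refine ⟨(S.powersetCard r).disjSum ∅, (∅ : Finset (Finset (Fin t))).disjSum
    (Sᶜ.powersetCard w), ?_, ?_, ?_⟩
  · simp [disjoint_left]
  · rintro (A | A) hA (B | B) hB <;>
      simp only [inl_mem_disjSum, inr_mem_disjSum, mem_powersetCard, notMem_empty] at hA hB
    exact adj_inl_inr.2 ⟨hA.2, hB.2, disjoint_compl_right.mono hA.1 hB.1⟩
  · simp [card_compl, hS, ← ht]

theorem card_edgeSet : Nat.card (biIntGraph t r w).edgeSet = t.choose r * (t - r).choose w := by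
  let P := (univ.powersetCard r).sigma fun A : Finset (Fin t) => Aᶜ.powersetCard w
  let f (p : Σ _ : Finset (Fin t), Finset (Fin t)) : Sym2 (Finset (Fin t) ⊕ Finset (Fin t)) :=
    s(inl p.1, inr p.2)
  have hf : f.Injective := fun p q h => by aesop
  have hE : (biIntGraph t r w).edgeSet = P.image f := by
    ext e
    induction e using Sym2.ind with | _ x y => ?_
    rcases x with A | A <;> rcases y with B | B <;>
      simp [P, f, subset_compl_iff_disjoint_left, and_comm, and_left_comm, and_assoc]
  rw [hE, Nat.card_coe_set_eq, Set.ncard_coe_finset, card_image_of_injective _ hf, card_sigma,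
    sum_congr rfl fun A hA => by
      rw [card_powersetCard, card_compl, Fintype.card_fin, (mem_powersetCard.1 hA).2],
    sum_const, card_powersetCard, card_fin, smul_eq_mul]

end biIntGraph

theorem maxBicliqueEdges_and_card_edges_biIntGraph_general (r w t : ℕ) :
    maxBicliqueEdges (biIntGraph t r w)
        = sSup {m : ℕ | ∃ t' t'' : ℕ, t' + t'' = t ∧ m = t'.choose r * t''.choose w} ∧
      Nat.card (biIntGraph t r w).edgeSet = t.choose r * (t - r).choose w := by
  refine ⟨csSup_eq_csSup_of_forall_exists_le ?_ ?_, biIntGraph.card_edgeSet⟩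
  · rintro _ ⟨X, Y, -, hXY, rfl⟩
    obtain ⟨t', t'', ht, hle⟩ := biIntGraph.exists_card_mul_card_le hXY
    exact ⟨_, ⟨t', t'', ht, rfl⟩, hle⟩
  · rintro _ ⟨t', t'', ht, rfl⟩
    obtain ⟨X, Y, hdisj, hXY, hcard⟩ :=
      biIntGraph.exists_biclique_card_mul_card_eq (r := r) (w := w) ht
    exact ⟨_, ⟨X, Y, hdisj, hXY, rfl⟩, hcard.ge⟩

/-- For positive integers `r, w, t` with `w ≤ r` and `t ≥ r + w`,
`B(I_t(r,w)) = max_{t'+t''=t} C(t',r)·C(t'',w)` and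
`|E(I_t(r,w))| = C(t,r)·C(t−r,w)`. -/
theorem maxBicliqueEdges_and_card_edges_biIntGraph (r w t : ℕ)
    (hw : 0 < w) (hwr : w ≤ r) (ht : r + w ≤ t) :
    maxBicliqueEdges (biIntGraph t r w)
        = sSup {m : ℕ | ∃ t' t'' : ℕ, t' + t'' = t ∧ m = t'.choose r * t''.choose w} ∧
      Nat.card (biIntGraph t r w).edgeSet = t.choose r * (t - r).choose w :=
  maxBicliqueEdges_and_card_edges_biIntGraph_general r w t
end

section
/- For all positive integers r, w, c with w ≤ r, it holds that N((r, w; c·(r+1)!·w!), r+w+1) = c·(r+w+1)!. -/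
/-!
Lower bound: count the incidences between points `x` and pairs `(L, M)` of disjoint index sets
of sizes `r`, `w` with `x ∈ ⋂_L B \ ⋃_M B`. Each of the `C(r+w+1, r)·(w+1)` pairs has at least
`d` such points, while a point lying in `s` blocks serves `C(s, r)·C(r+w+1-s, w) ≤ r + 1` pairs.
Upper bound: `d` copies of the family of all `(r+1)`-subsets of the index set.
-/

open Finset

variable {r w k d n t : ℕ}

def disjointPairs (t r w : ℕ) : Finset ((_ : Finset (Fin t)) × Finset (Fin t)) :=
  (univ.powersetCard r).sigma fun L => Lᶜ.powersetCard w

lemma card_disjointPairs : #(disjointPairs t r w) = t.choose r * (t - r).choose w := by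
  rw [disjointPairs, card_sigma, sum_const_nat fun L hL => ?_, card_powersetCard, card_univ,
    Fintype.card_fin]
  rw [card_powersetCard, card_compl, (mem_powersetCard.mp hL).2, Fintype.card_fin]

lemma filter_disjointPairs_subset_compl (S : Finset (Fin t)) :
    {p ∈ disjointPairs t r w | p.1 ⊆ S ∧ p.2 ⊆ Sᶜ}
      = (S.powersetCard r).sigma fun _ => Sᶜ.powersetCard w := by
  ext ⟨L, M⟩
  simp only [disjointPairs, mem_filter, mem_sigma, mem_powersetCard, subset_univ, true_and]
  constructor
  · rintro ⟨⟨hL, -, hM⟩, hLS, hMS⟩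
    exact ⟨⟨hLS, hL⟩, hMS, hM⟩
  · rintro ⟨⟨hLS, hL⟩, hMS, hM⟩
    exact ⟨⟨hL, fun i hi => mem_compl.mpr fun hiL => mem_compl.mp (hMS hi) (hLS hiL), hM⟩,
      hLS, hMS⟩

lemma card_filter_disjointPairs_subset_compl (S : Finset (Fin t)) :
    #{p ∈ disjointPairs t r w | p.1 ⊆ S ∧ p.2 ⊆ Sᶜ} = (#S).choose r * (t - #S).choose w := by
  rw [filter_disjointPairs_subset_compl, card_sigma, sum_const_nat fun _ _ => ?_,
    card_powersetCard]
  rw [card_powersetCard, card_compl, Fintype.card_fin]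

lemma mem_inf_sdiff_sup_iff (B : Fin t → Finset (Fin n)) (L M : Finset (Fin t)) (x : Fin n) :
    x ∈ L.inf B \ M.sup B ↔
      L ⊆ ({i | x ∈ B i} : Finset _) ∧ M ⊆ ({i | x ∈ B i} : Finset _)ᶜ := by
  simp [subset_iff, Finset.mem_inf]

/-- Double counting of incidences between points and pairs `(L, M)`: a point lying in exactly
`s` blocks is counted by `C(s, r) C(t - s, w)` pairs. -/
theorem IsCFF.choose_mul_choose_mul_le {B : Fin t → Finset (Fin n)} (hB : IsCFF r w d n t B)
    (hk : ∀ s ≤ t, s.choose r * (t - s).choose w ≤ k) :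
    t.choose r * (t - r).choose w * d ≤ n * k := by
  classical
  have := card_mul_le_card_mul (s := disjointPairs t r w) (t := univ) (m := d) (n := k)
    (fun p x => x ∈ p.1.inf B \ p.2.sup B) ?_ ?_
  · simpa [card_disjointPairs] using this
  · rintro ⟨L, M⟩ hp
    simp only [disjointPairs, mem_sigma, mem_powersetCard, subset_compl_iff_disjoint_left] at hp
    simpa only [bipartiteAbove, filter_univ_mem] using hB L M hp.2.1 hp.1.2 hp.2.2
  · intro x _
    simp only [bipartiteBelow, mem_inf_sdiff_sup_iff, card_filter_disjointPairs_subset_compl]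
    exact hk _ ((card_le_univ _).trans_eq (Fintype.card_fin t))

/-- Witness: label the points by `k`-subsets `S x` of the index set, each `k`-subset labelling
`m` points, and put `B i = {x | i ∈ S x}`. Some `k`-subset lies between `L` and `Mᶜ`, and its
`m` points are in every block of `L` and in no block of `M`. -/
theorem exists_isCFF_of_le (hrk : r ≤ k) (hkt : k + w ≤ t) (m : ℕ) :
    ∃ B : Fin t → Finset (Fin (t.choose k * m)), IsCFF r w m (t.choose k * m) t B := by
  classical
  obtain ⟨e⟩ : Nonempty (Fin (t.choose k * m) ≃ {S : Finset (Fin t) // #S = k} × Fin m) :=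
    Fintype.card_eq.mp (by simp [Fintype.card_finset_len])
  refine ⟨fun i => {x | i ∈ (e x).1.1}, fun L M hLM hL hM => ?_⟩
  obtain ⟨S, hLS, hSM, hS⟩ :=
    exists_subsuperset_card_eq (subset_compl_iff_disjoint_right.mpr hLM) (hL.trans_le hrk) (by rw [card_compl, Fintype.card_fin, hM]; omega)
  calc m = #(univ : Finset (Fin m)) := by simp
    _ ≤ #(L.inf _ \ M.sup _) := card_le_card_of_injOn (fun j => e.symm (⟨S, hS⟩, j))
      (fun j _ => by
        simp only [mem_coe, mem_inf_sdiff_sup_iff, mem_filter_univ, Equiv.apply_symm_apply,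
          filter_univ_mem]
        exact ⟨hLS, subset_compl_comm.mp hSM⟩)
      (fun j _ j' _ h => by simpa using h)

lemma choose_mul_choose_add_succ_sub_le (hwr : w ≤ r) {s : ℕ} (hs : s ≤ r + w + 1) :
    s.choose r * (r + w + 1 - s).choose w ≤ r + 1 := by
  obtain hs' | hs' | hs' | hs' : s < r ∨ s = r ∨ s = r + 1 ∨ r + 1 < s := by omega
  · simp [Nat.choose_eq_zero_of_lt hs']
  · subst s
    rw [show r + w + 1 - r = w + 1 by omega, Nat.choose_self, Nat.choose_succ_self_right]
    omega
  · subst s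
    rw [show r + w + 1 - (r + 1) = w by omega, Nat.choose_succ_self_right, Nat.choose_self,
      mul_one]
  · simp [Nat.choose_eq_zero_of_lt (show r + w + 1 - s < w by omega)]

lemma Ncff_eq_of_isCFF (hr : r ≠ 0) (hw : w ≠ 0)
    (hex : ∃ B : Fin t → Finset (Fin n), IsCFF r w d n t B)
    (hle : ∀ m (B : Fin t → Finset (Fin m)), IsCFF r w d m t B → n ≤ m) :
    Ncff r w d t = n := by
  rw [Ncff, if_neg (by tauto)]
  exact le_antisymm (Nat.sInf_le hex) (le_csInf ⟨n, hex⟩ fun m ⟨B, hB⟩ => hle m B hB)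

theorem cff_exact_value_small_general (r w c : ℕ) (hw : 0 < w) (hwr : w ≤ r) :
    Ncff r w (c * (r + 1).factorial * w.factorial) (r + w + 1)
      = c * (r + w + 1).factorial := by
  apply Ncff_eq_of_isCFF (by omega) hw.ne'
  · have hn : (r + w + 1).choose (r + 1) * (c * (r + 1).factorial * w.factorial)
        = c * (r + w + 1).factorial := by
      rw [← Nat.choose_mul_factorial_mul_factorial (show r + 1 ≤ r + w + 1 by omega),
        show r + w + 1 - (r + 1) = w by omega]
      ring
    exact hn ▸ exists_isCFF_of_le (r := r) (w := w) (Nat.le_succ r) (by omega) _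
  · intro n B hB
    have hcount := hB.choose_mul_choose_mul_le fun _ => choose_mul_choose_add_succ_sub_le hwr
    have hfact : (r + w + 1).choose r * (r + w + 1 - r).choose w
        * (c * (r + 1).factorial * w.factorial) = (r + 1) * (c * (r + w + 1).factorial) := by
      rw [← Nat.choose_mul_factorial_mul_factorial (show r ≤ r + w + 1 by omega),
        show r + w + 1 - r = w + 1 by omega, Nat.choose_succ_self_right, Nat.factorial_succ r,
        Nat.factorial_succ w]
      ring
    rw [hfact, mul_comm n] at hcount
    exact Nat.le_of_mul_le_mul_left hcount r.succ_pos

/-- For positive integers `r, w, c` with `w ≤ r`,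
`N((r, w; c·(r+1)!·w!), r+w+1) = c·(r+w+1)!`. -/
theorem cff_exact_value_small (r w c : ℕ) (hw : 0 < w) (hwr : w ≤ r) (hc : 0 < c) :
    Ncff r w (c * (r + 1).factorial * w.factorial) (r + w + 1)
      = c * (r + w + 1).factorial :=
  cff_exact_value_small_general r w c hw hwr
end
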